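/- For every input dimension d ≥ 1, hidden size n ≥ 1, and every activation function σ : ℝ → ℝ, one has H_MIRNN(n) ⊆ H_CPRNN(n,n), i.e. every MIRNN of hidden size n computes a function computable by a CPRNN of rank equal to its hidden size n (both sides taken with the same d and the same σ). -/

import Mathlib

open Matrix MeasureTheory

noncomputable section

/-- The CP tensor `[[A,B,C]]`. -/
def cpT {d1 d2 d3 R : ℕ} (A : Matrix (Fin d1) (Fin R) ℝ) (B : Matrix (Fin d2) (Fin R) ℝ)
    (C : Matrix (Fin d3) (Fin R) ℝ) : Fin d1 → Fin d2 → Fin d3 → ℝ :=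
  fun i j k => ∑ r, A i r * B j r * C k r

/-- `(T ×₁ u ×₂ v)` for a third order tensor `T`. -/
def modeProd {d1 d2 d3 : ℕ} (T : Fin d1 → Fin d2 → Fin d3 → ℝ) (u : Fin d1 → ℝ)
    (v : Fin d2 → ℝ) : Fin d3 → ℝ :=
  fun k => ∑ i, ∑ j, T i j k * u i * v j

/-- The CP rank of a tensor: the minimal `R` admitting a rank-`R` CP decomposition. -/
def cprank {d1 d2 d3 : ℕ} (T : Fin d1 → Fin d2 → Fin d3 → ℝ) : ℕ :=
  sInf {R : ℕ | ∃ (A : Matrix (Fin d1) (Fin R) ℝ) (B : Matrix (Fin d2) (Fin R) ℝ)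
    (C : Matrix (Fin d3) (Fin R) ℝ), T = cpT A B C}

/-- The maximal CP rank of tensors in `ℝ^{d1×d2×d3}`. -/
def Rmax (d1 d2 d3 : ℕ) : ℕ :=
  sSup {r : ℕ | ∃ T : Fin d1 → Fin d2 → Fin d3 → ℝ, cprank T = r}

/-- `R` is a typical rank if the set of tensors of CP rank `R` has positive Lebesgue measure. -/
def IsTypicalRank (d1 d2 d3 R : ℕ) : Prop :=
  0 < volume {T : Fin d1 → Fin d2 → Fin d3 → ℝ | cprank T = R}

/-- The maximal typical CP rank. -/
def RtypMax (d1 d2 d3 : ℕ) : ℕ := sSup {R : ℕ | IsTypicalRank d1 d2 d3 R}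

/-- Hidden states of a CPRNN; `x t` is the input at time `t+1`. -/
def cprnnStates {n d R : ℕ} (σ : ℝ → ℝ) (h0 : Fin n → ℝ)
    (A : Matrix (Fin n) (Fin R) ℝ) (B : Matrix (Fin d) (Fin R) ℝ) (C : Matrix (Fin n) (Fin R) ℝ)
    (U : Matrix (Fin n) (Fin d) ℝ) (V : Matrix (Fin n) (Fin n) ℝ) (b : Fin n → ℝ)
    (x : ℕ → Fin d → ℝ) : ℕ → Fin n → ℝ
  | 0 => h0
  | t + 1 => fun k =>
      σ (modeProd (cpT A B C) (cprnnStates σ h0 A B C U V b x t) (x t) k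
        + V.mulVec (cprnnStates σ h0 A B C U V b x t) k + U.mulVec (x t) k + b k)

/-- Hidden states of a CPBIRNN (second-order term only). -/
def cpbirnnStates {n d R : ℕ} (σ : ℝ → ℝ) (h0 : Fin n → ℝ)
    (A : Matrix (Fin n) (Fin R) ℝ) (B : Matrix (Fin d) (Fin R) ℝ) (C : Matrix (Fin n) (Fin R) ℝ)
    (x : ℕ → Fin d → ℝ) : ℕ → Fin n → ℝ
  | 0 => h0
  | t + 1 => fun k =>
      σ (modeProd (cpT A B C) (cpbirnnStates σ h0 A B C x t) (x t) k)

/-- Hidden states of a 2RNN with arbitrary second-order tensor. -/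
def rnn2States {n d : ℕ} (σ : ℝ → ℝ) (h0 : Fin n → ℝ) (T : Fin n → Fin d → Fin n → ℝ)
    (U : Matrix (Fin n) (Fin d) ℝ) (V : Matrix (Fin n) (Fin n) ℝ) (b : Fin n → ℝ)
    (x : ℕ → Fin d → ℝ) : ℕ → Fin n → ℝ
  | 0 => h0
  | t + 1 => fun k =>
      σ (modeProd T (rnn2States σ h0 T U V b x t) (x t) k
        + V.mulVec (rnn2States σ h0 T U V b x t) k + U.mulVec (x t) k + b k)

/-- Hidden states of a MIRNN. -/
def mirnnStates {n d : ℕ} (σ : ℝ → ℝ) (h0 α β1 β2 b : Fin n → ℝ)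
    (U : Matrix (Fin n) (Fin d) ℝ) (V : Matrix (Fin n) (Fin n) ℝ)
    (x : ℕ → Fin d → ℝ) : ℕ → Fin n → ℝ
  | 0 => h0
  | t + 1 => fun k =>
      σ (α k * V.mulVec (mirnnStates σ h0 α β1 β2 b U V x t) k * U.mulVec (x t) k
        + β1 k * V.mulVec (mirnnStates σ h0 α β1 β2 b U V x t) k
        + β2 k * U.mulVec (x t) k + b k)

/-- The class of functions computed by CPRNNs of rank `R` and hidden size `n`
(mapping the input sequence `x¹,x²,…` to the hidden state sequence `h¹,h²,…`). -/
def HCPRNN (d n R : ℕ) (σ : ℝ → ℝ) : Set ((ℕ → Fin d → ℝ) → ℕ → Fin n → ℝ) :=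
  {h | ∃ (h0 : Fin n → ℝ) (A : Matrix (Fin n) (Fin R) ℝ) (B : Matrix (Fin d) (Fin R) ℝ)
      (C : Matrix (Fin n) (Fin R) ℝ) (U : Matrix (Fin n) (Fin d) ℝ)
      (V : Matrix (Fin n) (Fin n) ℝ) (b : Fin n → ℝ),
      ∀ x t, h x t = cprnnStates σ h0 A B C U V b x (t + 1)}

/-- The class of functions computed by CPBIRNNs of rank `R` and hidden size `n`. -/
def HCPBIRNN (d n R : ℕ) (σ : ℝ → ℝ) : Set ((ℕ → Fin d → ℝ) → ℕ → Fin n → ℝ) :=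
  {h | ∃ (h0 : Fin n → ℝ) (A : Matrix (Fin n) (Fin R) ℝ) (B : Matrix (Fin d) (Fin R) ℝ)
      (C : Matrix (Fin n) (Fin R) ℝ),
      ∀ x t, h x t = cpbirnnStates σ h0 A B C x (t + 1)}

/-- The class of functions computed by 2RNNs of hidden size `n`. -/
def H2RNN (d n : ℕ) (σ : ℝ → ℝ) : Set ((ℕ → Fin d → ℝ) → ℕ → Fin n → ℝ) :=
  {h | ∃ (h0 : Fin n → ℝ) (T : Fin n → Fin d → Fin n → ℝ) (U : Matrix (Fin n) (Fin d) ℝ)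
      (V : Matrix (Fin n) (Fin n) ℝ) (b : Fin n → ℝ),
      ∀ x t, h x t = rnn2States σ h0 T U V b x (t + 1)}

/-- The class of functions computed by MIRNNs of hidden size `n`. -/
def HMIRNN (d n : ℕ) (σ : ℝ → ℝ) : Set ((ℕ → Fin d → ℝ) → ℕ → Fin n → ℝ) :=
  {h | ∃ (h0 α β1 β2 b : Fin n → ℝ) (U : Matrix (Fin n) (Fin d) ℝ)
      (V : Matrix (Fin n) (Fin n) ℝ),
      ∀ x t, h x t = mirnnStates σ h0 α β1 β2 b U V x (t + 1)}

/-- The class `L(n,q) ∘ H_CPBIRNN(R,n)`: CPBIRNNs composed with a linear output map. -/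
def LHCPBIRNN (d n q R : ℕ) (σ : ℝ → ℝ) : Set ((ℕ → Fin d → ℝ) → ℕ → Fin q → ℝ) :=
  {f | ∃ (ℓ : (Fin n → ℝ) →ₗ[ℝ] (Fin q → ℝ)) (h : (ℕ → Fin d → ℝ) → ℕ → Fin n → ℝ),
      h ∈ HCPBIRNN d n R σ ∧ ∀ x t, f x t = ℓ (h x t)}

end

/-! A MIRNN is the CPRNN of rank `n` with factors `A = Vᵀ`, `B = Uᵀ`, `C = diag α`, whose
first-order weights are `diag β₁ * V` and `diag β₂ * U`: contracting `[[Vᵀ, Uᵀ, C]]` with `h`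
and `x` gives `C *ᵥ ((V *ᵥ h) ⊙ (U *ᵥ x))`, and a diagonal `C` turns this into the Hadamard
product of the MIRNN. -/

theorem modeProd_cpT {d1 d2 d3 R : ℕ} (A : Matrix (Fin d1) (Fin R) ℝ)
    (B : Matrix (Fin d2) (Fin R) ℝ) (C : Matrix (Fin d3) (Fin R) ℝ) (u : Fin d1 → ℝ)
    (v : Fin d2 → ℝ) :
    modeProd (cpT A B C) u v = C *ᵥ (Aᵀ *ᵥ u * Bᵀ *ᵥ v : Fin R → ℝ) := by
  funext k
  simp only [modeProd, cpT, mulVec, dotProduct, Pi.mul_apply, transpose_apply,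
    Finset.sum_mul, Finset.mul_sum]
  rw [Finset.sum_congr rfl fun i _ => Finset.sum_comm, Finset.sum_comm]
  refine Finset.sum_congr rfl fun r _ => ?_
  rw [Finset.sum_comm]
  refine Finset.sum_congr rfl fun j _ => Finset.sum_congr rfl fun i _ => ?_
  ring

theorem modeProd_cpT_transpose_diagonal {n d : ℕ} (U : Matrix (Fin n) (Fin d) ℝ)
    (V : Matrix (Fin n) (Fin n) ℝ) (α h : Fin n → ℝ) (x : Fin d → ℝ) :
    modeProd (cpT Vᵀ Uᵀ (diagonal α)) h x = α * (V *ᵥ h) * (U *ᵥ x) := by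
  funext k
  simp only [modeProd_cpT, transpose_transpose, mulVec_diagonal, Pi.mul_apply, mul_assoc]

theorem cprnnStates_eq_mirnnStates {n d : ℕ} (σ : ℝ → ℝ) (h0 α β1 β2 b : Fin n → ℝ)
    (U : Matrix (Fin n) (Fin d) ℝ) (V : Matrix (Fin n) (Fin n) ℝ) (x : ℕ → Fin d → ℝ)
    (t : ℕ) :
    cprnnStates σ h0 Vᵀ Uᵀ (diagonal α) (diagonal β2 * U) (diagonal β1 * V) b x t
      = mirnnStates σ h0 α β1 β2 b U V x t := by
  induction t with
  | zero => rfl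
  | succ t ih =>
    funext k
    simp only [cprnnStates, mirnnStates, ih, modeProd_cpT_transpose_diagonal,
      ← mulVec_mulVec, mulVec_diagonal, Pi.mul_apply]

theorem mirnn_subset_cprnn_rank_n_general (d n : ℕ) (σ : ℝ → ℝ) :
    HMIRNN d n σ ⊆ HCPRNN d n n σ := by
  rintro f ⟨h0, α, β1, β2, b, U, V, hf⟩
  refine ⟨h0, Vᵀ, Uᵀ, diagonal α, diagonal β2 * U, diagonal β1 * V, b, fun x t => ?_⟩
  rw [hf, cprnnStates_eq_mirnnStates]

/-- For every `d ≥ 1`, `n ≥ 1` and every activation `σ`,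
`H_MIRNN(n) ⊆ H_CPRNN(n,n)`. -/
theorem mirnn_subset_cprnn_rank_n (d n : ℕ) (hd : 1 ≤ d) (hn : 1 ≤ n) (σ : ℝ → ℝ) :
    HMIRNN d n σ ⊆ HCPRNN d n n σ :=
  mirnn_subset_cprnn_rank_n_general d n σ
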